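/- arXiv:cs/9908005 — 2 statements merged into one kernel-verified Lean document; each statement's English description precedes it below -/
import Mathlib

section
/- If c is the center of a sphere S in ℝ^d and Δ_c(a,b) is a triangle cone with apex c (with c not on segment ab), then the intersection Δ_c(a,b) ∩ S is path-connected (it consists of at most one circular arc, possibly degenerate to a point or empty). -/
/-! Projecting radially from `c` maps the segment `[a, b]` continuously onto the intersection of
the cone with the sphere (continuity because `c ∉ [a, b]`), and the segment is path-connected. -/

open Metric

section RadialProjection

variable {E : Type*} [NormedAddCommGroup E] [NormedSpace ℝ E]

def rayCone (c : E) (s : Set E) : Set E :=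
  {x | ∃ p ∈ s, ∃ t : ℝ, 0 ≤ t ∧ x = c + t • (p - c)}

noncomputable def radialProjection (c : E) (r : ℝ) (p : E) : E :=
  c + (r / ‖p - c‖) • (p - c)

theorem continuousOn_radialProjection (c : E) (r : ℝ) :
    ContinuousOn (radialProjection c r) {p | p ≠ c} := by
  refine continuousOn_const.add (ContinuousOn.smul ?_ (by fun_prop))
  exact continuousOn_const.div (by fun_prop) fun p hp => norm_ne_zero_iff.mpr (sub_ne_zero.mpr hp)

theorem radialProjection_mem_sphere {c p : E} (hp : p ≠ c) {r : ℝ} (hr : 0 ≤ r) :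
    radialProjection c r p ∈ sphere c r := by
  have hpc : ‖p - c‖ ≠ 0 := norm_ne_zero_iff.mpr (sub_ne_zero.mpr hp)
  rw [mem_sphere, dist_eq_norm, radialProjection, add_sub_cancel_left, norm_smul,
    Real.norm_of_nonneg (by positivity), div_mul_cancel₀ r hpc]

theorem rayCone_inter_sphere_eq_image {c : E} {s : Set E} (hc : c ∉ s) {r : ℝ} (hr : 0 ≤ r) :
    rayCone c s ∩ sphere c r = radialProjection c r '' s := by
  have hne : ∀ p ∈ s, p ≠ c := fun p hp h => hc (h ▸ hp)
  ext x
  constructor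
  · rintro ⟨⟨p, hp, t, ht, rfl⟩, hx⟩
    have hpc : ‖p - c‖ ≠ 0 := norm_ne_zero_iff.mpr (sub_ne_zero.mpr (hne p hp))
    have hnorm : t * ‖p - c‖ = r := by
      rwa [mem_sphere, dist_eq_norm, add_sub_cancel_left, norm_smul,
        Real.norm_of_nonneg ht] at hx
    refine ⟨p, hp, ?_⟩
    rw [radialProjection, ← hnorm, mul_div_cancel_right₀ t hpc]
  · rintro ⟨p, hp, rfl⟩
    exact ⟨⟨p, hp, r / ‖p - c‖, by positivity, rfl⟩, radialProjection_mem_sphere (hne p hp) hr⟩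

theorem IsPathConnected.rayCone_inter_sphere {c : E} {s : Set E} (hs : IsPathConnected s)
    (hc : c ∉ s) {r : ℝ} (hr : 0 ≤ r) : IsPathConnected (rayCone c s ∩ sphere c r) := by
  rw [rayCone_inter_sphere_eq_image hc hr]
  exact hs.image' ((continuousOn_radialProjection c r).mono fun p hp h => hc (h ▸ hp))

end RadialProjection

/-- The intersection of a triangle cone with apex at the center of a sphere
with that sphere is empty or path-connected (at most one circular arc). -/
theorem triangleCone_inter_sphere_pathConnected {d : ℕ}
    (a b c : EuclideanSpace ℝ (Fin d)) (hc : c ∉ segment ℝ a b)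
    (r : ℝ) (hr : 0 < r) :
    ({x : EuclideanSpace ℝ (Fin d) |
        ∃ p ∈ segment ℝ a b, ∃ t : ℝ, 0 ≤ t ∧ x = c + t • (p - c)} ∩
      Metric.sphere c r) = ∅ ∨
    IsPathConnected
      ({x : EuclideanSpace ℝ (Fin d) |
          ∃ p ∈ segment ℝ a b, ∃ t : ℝ, 0 ≤ t ∧ x = c + t • (p - c)} ∩
        Metric.sphere c r) :=
  Or.inr <| ((convex_segment a b).isPathConnected ⟨a, left_mem_segment ℝ a b⟩).rayCone_inter_sphere
    hc hr.le
end

section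
/- Let s be a segment in ℝ⁴ and S₁ a 2-sphere (the nondegenerate intersection of two 3-spheres centered at v₀ and v₂). If the line containing s passes through neither v₀ nor v₂, and neither of the two dot-product degeneracies ⟨v₂ − v₀, x − v₀⟩ = 0 nor ⟨v₂ − v₀, x − v₂⟩ = 0 holds for points x ∈ S₁ (i.e., the cone angles θ₀, θ₂ ∈ [0, π/2)), then the set of points x ∈ S₁ for which the two-segment chain (v₀, x, v₂) intersects s is finite, with at most four elements. -/
open scoped RealInnerProductSpace

private lemma key_seg (v a p q : EuclideanSpace ℝ (Fin 4)) (ℓ c : ℝ)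
    (hℓ : 0 < ℓ) (hc : c ≠ 0) (hpq : p ≠ q)
    (hv : v ∉ (affineSpan ℝ ({p, q} : Set (EuclideanSpace ℝ (Fin 4))) :
      Set (EuclideanSpace ℝ (Fin 4))))
    (S : Set (EuclideanSpace ℝ (Fin 4)))
    (hS : ∀ x ∈ S, ‖x - v‖ = ℓ ∧ ⟪a, x - v⟫ = c) :
    {x ∈ S | (segment ℝ v x ∩ segment ℝ p q).Nonempty}.Finite ∧
    {x ∈ S | (segment ℝ v x ∩ segment ℝ p q).Nonempty}.ncard ≤ 2 := by
  classical
  set u₀ : EuclideanSpace ℝ (Fin 4) := p - v with hu₀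
  set d : EuclideanSpace ℝ (Fin 4) := q - p with hd
  set α : ℝ := ⟪a, u₀⟫ with hα
  set β : ℝ := ⟪a, d⟫ with hβ
  set A : ℝ := ℓ^2*β^2 - c^2*⟪d,d⟫ with hA
  set B : ℝ := 2*(ℓ^2*α*β - c^2*⟪u₀,d⟫) with hB
  set C : ℝ := ℓ^2*α^2 - c^2*⟪u₀,u₀⟫ with hC
  have hd0 : d ≠ 0 := sub_ne_zero.mpr (Ne.symm hpq)
  have hu00 : u₀ ≠ 0 := by
    intro h
    apply hv
    have hvp : v = p := by
      have := sub_eq_zero.mp h; rw [this]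
    rw [hvp]
    exact left_mem_affineSpan_pair ℝ p q
  -- Step 1: the coefficients are not all zero
  have hABC : ¬ (A = 0 ∧ B = 0 ∧ C = 0) := by
    rintro ⟨hA0, hB0, hC0⟩
    have e1 : ℓ^2*β^2 = c^2*⟪d,d⟫ := by
      have := hA0; rw [hA] at this; linarith
    have e2 : ℓ^2*α^2 = c^2*⟪u₀,u₀⟫ := by
      have := hC0; rw [hC] at this; linarith
    have e3 : ℓ^2*α*β = c^2*⟪u₀,d⟫ := by
      have := hB0; rw [hB] at this; linarith
    have hc4 : ((c:ℝ)^2)^2 ≠ 0 := pow_ne_zero _ (pow_ne_zero _ hc)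
    have h5 : ⟪u₀,d⟫^2 = ⟪u₀,u₀⟫*⟪d,d⟫ := by
      apply mul_left_cancel₀ hc4
      calc (c^2)^2 * ⟪u₀,d⟫^2 = (c^2*⟪u₀,d⟫)^2 := by ring
        _ = (ℓ^2*α*β)^2 := by rw [e3]
        _ = (ℓ^2*α^2)*(ℓ^2*β^2) := by ring
        _ = (c^2*⟪u₀,u₀⟫)*(c^2*⟪d,d⟫) := by rw [e1, e2]
        _ = (c^2)^2*(⟪u₀,u₀⟫*⟪d,d⟫) := by ring
    have h6 : ⟪u₀,d⟫^2 = (‖u₀‖*‖d‖)^2 := by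
      rw [h5, real_inner_self_eq_norm_sq, real_inner_self_eq_norm_sq]; ring
    have h7 : |⟪u₀,d⟫| = ‖u₀‖*‖d‖ := by
      have h := (sq_eq_sq_iff_abs_eq_abs (a := ⟪u₀,d⟫) (b := ‖u₀‖*‖d‖)).mp h6
      rwa [abs_of_nonneg (mul_nonneg (norm_nonneg u₀) (norm_nonneg d))] at h
    have h8 : ‖(⟪u₀,d⟫ : ℝ)‖ = ‖u₀‖*‖d‖ := by rw [Real.norm_eq_abs]; exact h7
    obtain ⟨r, hr0, hrd⟩ := (norm_inner_eq_norm_iff hu00 hd0).mp h8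
    -- d = r • u₀
    apply hv
    have hmem := smul_vsub_vadd_mem_affineSpan_pair (-r⁻¹) p q
    have hveq : v = -r⁻¹ • (q - p) + p := by
      have hue : u₀ = r⁻¹ • d := by
        rw [hrd, smul_smul, inv_mul_cancel₀ hr0, one_smul]
      have : v = p - u₀ := by rw [hu₀]; module
      rw [this, hue, neg_smul]
      module
    rw [hveq]
    simpa [vsub_eq_sub, vadd_eq_add] using hmem
  -- Step 2: the root set T is small
  set T : Set ℝ := {t | A*t^2 + B*t + C = 0} with hT
  set P : Polynomial ℝ :=
    Polynomial.C A * Polynomial.X^2 + Polynomial.C B * Polynomial.X + Polynomial.C C with hP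
  have hPne : P ≠ 0 := by
    intro h0
    apply hABC
    refine ⟨?_, ?_, ?_⟩
    · have := congrArg (fun r => Polynomial.coeff r 2) h0
      simpa [hP, Polynomial.coeff_add, Polynomial.coeff_C_mul, Polynomial.coeff_X_pow,
        Polynomial.coeff_C, Polynomial.coeff_X] using this
    · have := congrArg (fun r => Polynomial.coeff r 1) h0
      simpa [hP, Polynomial.coeff_add, Polynomial.coeff_C_mul, Polynomial.coeff_X_pow,
        Polynomial.coeff_C, Polynomial.coeff_X] using this
    · have := congrArg (fun r => Polynomial.coeff r 0) h0
      simpa [hP, Polynomial.coeff_add, Polynomial.coeff_C_mul, Polynomial.coeff_X_pow,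
        Polynomial.coeff_C, Polynomial.coeff_X] using this
  have hTsub : T ⊆ (P.roots.toFinset : Set ℝ) := by
    intro t ht
    simp only [Finset.coe_sort_coe, Multiset.mem_toFinset, Finset.mem_coe]
    rw [Polynomial.mem_roots hPne]
    show Polynomial.eval t P = 0
    have : Polynomial.eval t P = A*t^2 + B*t + C := by simp [hP]
    rw [this]; exact ht
  have hTfin : T.Finite := Set.Finite.subset (P.roots.toFinset.finite_toSet) hTsub
  have hTcard : T.ncard ≤ 2 := by
    calc T.ncard ≤ (↑P.roots.toFinset : Set ℝ).ncard :=
          Set.ncard_le_ncard hTsub (P.roots.toFinset.finite_toSet)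
      _ = P.roots.toFinset.card := Set.ncard_coe_finset _
      _ ≤ Multiset.card P.roots := Multiset.toFinset_card_le _
      _ ≤ P.natDegree := Polynomial.card_roots' P
      _ ≤ 2 := Polynomial.natDegree_quadratic_le
  -- Step 3: the obstructed set injects into T via the map ψ
  set ψ : ℝ → EuclideanSpace ℝ (Fin 4) :=
    fun t => v + (ℓ / ‖u₀ + t • d‖) • (u₀ + t • d) with hψ
  have hsub : {x ∈ S | (segment ℝ v x ∩ segment ℝ p q).Nonempty} ⊆ ψ '' T := by
    rintro x ⟨hxS, y, hy1, hy2⟩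
    obtain ⟨hxl, hxc⟩ := hS x hxS
    rw [segment_eq_image'] at hy1 hy2
    obtain ⟨u, hu01, hyu⟩ := hy1
    obtain ⟨t, ht01, hyt⟩ := hy2
    have hyd : y - v = u₀ + t • d := by
      rw [← hyt, hu₀, hd]; module
    have hyu2 : v + u • (x - v) = y := hyu
    have hyu' : y - v = u • (x - v) := by rw [← hyu2]; module
    have hu0 : u ≠ 0 := by
      intro h
      apply hv
      have hyv : y = v := by rw [← hyu2, h, zero_smul, add_zero]
      have hmem := smul_vsub_vadd_mem_affineSpan_pair t p q
      have hyt2 : p + t • (q - p) = y := hyt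
      have : v = t • (q - p) + p := by rw [← hyv, ← hyt2]; module
      rw [this]
      simpa [vsub_eq_sub, vadd_eq_add] using hmem
    have hupos : 0 < u := lt_of_le_of_ne hu01.1 (Ne.symm hu0)
    have hnorm : ‖y - v‖ = u * ℓ := by
      rw [hyu', norm_smul, hxl, Real.norm_eq_abs, abs_of_pos hupos]
    have hinner : ⟪a, y - v⟫ = u * c := by
      rw [hyu', real_inner_smul_right, hxc]
    have htT : t ∈ T := by
      show A*t^2 + B*t + C = 0
      have expand1 : ⟪a, y - v⟫ = α + t * β := by
        rw [hyd, inner_add_right, real_inner_smul_right, hα, hβ]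
      have expand2 : ‖y - v‖^2 = ⟪u₀,u₀⟫ + 2*(t*⟪u₀,d⟫) + t^2*⟪d,d⟫ := by
        rw [← real_inner_self_eq_norm_sq, hyd]
        simp only [inner_add_left, inner_add_right, real_inner_smul_left,
          real_inner_smul_right, real_inner_comm d u₀]
        ring
      have hkey : A*t^2 + B*t + C = ℓ^2*⟪a, y - v⟫^2 - c^2*‖y - v‖^2 := by
        rw [expand1, expand2, hA, hB, hC]; ring
      rw [hkey, hinner, hnorm]; ring
    refine ⟨t, htT, ?_⟩
    show v + (ℓ / ‖u₀ + t • d‖) • (u₀ + t • d) = x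
    rw [← hyd, hnorm, hyu']
    have hdiv : ℓ / (u*ℓ) = u⁻¹ := by
      field_simp
    rw [hdiv, smul_smul, inv_mul_cancel₀ hu0, one_smul]
    module
  constructor
  · exact Set.Finite.subset (hTfin.image ψ) hsub
  · calc {x ∈ S | (segment ℝ v x ∩ segment ℝ p q).Nonempty}.ncard
        ≤ (ψ '' T).ncard := Set.ncard_le_ncard hsub (hTfin.image ψ)
      _ ≤ T.ncard := Set.ncard_image_le hTfin
      _ ≤ 2 := hTcard

/-- Under the nondegeneracy hypotheses, a single segment obstructs at most four
positions of the elbow `x` on the 2-sphere `S₁`. -/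
theorem segment_obstructs_at_most_four
    (v₀ v₂ : EuclideanSpace ℝ (Fin 4)) (ℓ₀ ℓ₁ : ℝ)
    (hℓ₀ : 0 < ℓ₀) (hℓ₁ : 0 < ℓ₁)
    (h₁ : |ℓ₀ - ℓ₁| < ‖v₀ - v₂‖) (h₂ : ‖v₀ - v₂‖ < ℓ₀ + ℓ₁)
    (p q : EuclideanSpace ℝ (Fin 4)) (hpq : p ≠ q)
    (hv₀ : v₀ ∉ (affineSpan ℝ ({p, q} : Set (EuclideanSpace ℝ (Fin 4))) :
      Set (EuclideanSpace ℝ (Fin 4))))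
    (hv₂ : v₂ ∉ (affineSpan ℝ ({p, q} : Set (EuclideanSpace ℝ (Fin 4))) :
      Set (EuclideanSpace ℝ (Fin 4))))
    (hdeg : ∀ x ∈ Metric.sphere v₀ ℓ₀ ∩ Metric.sphere v₂ ℓ₁,
      ⟪v₂ - v₀, x - v₀⟫ ≠ 0 ∧ ⟪v₂ - v₀, x - v₂⟫ ≠ 0) :
    {x ∈ Metric.sphere v₀ ℓ₀ ∩ Metric.sphere v₂ ℓ₁ |
        ((segment ℝ v₀ x ∪ segment ℝ x v₂) ∩ segment ℝ p q).Nonempty}.Finite ∧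
    {x ∈ Metric.sphere v₀ ℓ₀ ∩ Metric.sphere v₂ ℓ₁ |
        ((segment ℝ v₀ x ∪ segment ℝ x v₂) ∩ segment ℝ p q).Nonempty}.ncard ≤ 4 := by
  classical
  set S₁ : Set (EuclideanSpace ℝ (Fin 4)) :=
    Metric.sphere v₀ ℓ₀ ∩ Metric.sphere v₂ ℓ₁ with hS₁
  rcases S₁.eq_empty_or_nonempty with hemp | ⟨x₀, hx₀⟩
  · have he : {x ∈ S₁ | ((segment ℝ v₀ x ∪ segment ℝ x v₂) ∩ segment ℝ p q).Nonempty} = ∅ := by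
      rw [Set.eq_empty_iff_forall_notMem]
      rintro x ⟨hx, -⟩
      rw [hemp] at hx
      exact hx
    rw [he]
    exact ⟨Set.finite_empty, by simp⟩
  · -- distances from spheres
    have hmem : ∀ x ∈ S₁, ‖x - v₀‖ = ℓ₀ ∧ ‖x - v₂‖ = ℓ₁ := by
      rintro x ⟨hx0, hx2⟩
      rw [Metric.mem_sphere, dist_eq_norm] at hx0 hx2
      exact ⟨hx0, hx2⟩
    -- the inner products are constant on S₁
    have hconst₀ : ∀ x ∈ S₁, ⟪v₂ - v₀, x - v₀⟫ = (ℓ₀^2 + ‖v₂ - v₀‖^2 - ℓ₁^2)/2 := by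
      intro x hx
      obtain ⟨hx0, hx2⟩ := hmem x hx
      have hsplit : x - v₂ = (x - v₀) - (v₂ - v₀) := by module
      have := norm_sub_sq_real (x - v₀) (v₂ - v₀)
      rw [← hsplit, hx0, hx2, real_inner_comm] at this
      linarith
    have hconst₂ : ∀ x ∈ S₁, ⟪v₀ - v₂, x - v₂⟫ = (ℓ₁^2 + ‖v₀ - v₂‖^2 - ℓ₀^2)/2 := by
      intro x hx
      obtain ⟨hx0, hx2⟩ := hmem x hx
      have hsplit : x - v₀ = (x - v₂) - (v₀ - v₂) := by module
      have := norm_sub_sq_real (x - v₂) (v₀ - v₂)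
      rw [← hsplit, hx0, hx2, real_inner_comm] at this
      linarith
    set c₀ : ℝ := (ℓ₀^2 + ‖v₂ - v₀‖^2 - ℓ₁^2)/2 with hc₀def
    set c₂ : ℝ := (ℓ₁^2 + ‖v₀ - v₂‖^2 - ℓ₀^2)/2 with hc₂def
    have hc₀ : c₀ ≠ 0 := by
      rw [← hconst₀ x₀ hx₀]
      exact (hdeg x₀ hx₀).1
    have hc₂ : c₂ ≠ 0 := by
      rw [← hconst₂ x₀ hx₀]
      intro h
      apply (hdeg x₀ hx₀).2
      have : v₂ - v₀ = -(v₀ - v₂) := by module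
      rw [this, inner_neg_left, h, neg_zero]
    have K₀ := key_seg v₀ (v₂ - v₀) p q ℓ₀ c₀ hℓ₀ hc₀ hpq hv₀ S₁
      (fun x hx => ⟨(hmem x hx).1, hconst₀ x hx⟩)
    have K₂ := key_seg v₂ (v₀ - v₂) p q ℓ₁ c₂ hℓ₁ hc₂ hpq hv₂ S₁
      (fun x hx => ⟨(hmem x hx).2, hconst₂ x hx⟩)
    have hsplit : {x ∈ S₁ | ((segment ℝ v₀ x ∪ segment ℝ x v₂) ∩ segment ℝ p q).Nonempty}
        = {x ∈ S₁ | (segment ℝ v₀ x ∩ segment ℝ p q).Nonempty}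
          ∪ {x ∈ S₁ | (segment ℝ v₂ x ∩ segment ℝ p q).Nonempty} := by
      ext x
      simp only [Set.mem_setOf_eq, Set.mem_union, Set.union_inter_distrib_right,
        Set.union_nonempty, segment_symm (𝕜 := ℝ) (x := x) (y := v₂)]
      tauto
    rw [hsplit]
    exact ⟨K₀.1.union K₂.1,
      le_trans (Set.ncard_union_le _ _) (by omega)⟩
end
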